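/- arXiv:2603.29566 — 2 statements merged into one kernel-verified Lean document; each statement's English description precedes it below -/
import Mathlib

section
/- Fix a group element g_k in a finite group G of order n, and regard the entries θ(g_1),…,θ(g_n) as independent polynomial indeterminates. Then in the expansion of det(Mat_θ) as a polynomial in these indeterminates, the monomial θ(g_k)^n appears with coefficient ±1; in particular det(Mat_θ) is a nonzero polynomial, so the condition det(θ) ≠ 0 is generic (holds on a Zariski-dense subset of K^n for an infinite field K of characteristic 0). -/
/-!
In the Leibniz expansion of `det (Mat X)`, the permutation `σ` contributes `±∏ᵢ X (σ i * i⁻¹)`,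
which is `X k ^ n` exactly when `σ i * i⁻¹ = k` for every `i`. Since `k` occurs once in each
column, this singles out `σ = (k * ·)`, so the coefficient of `X k ^ n` is its sign.
-/

open Finset MvPolynomial

/-- The circulant matrix of a filter. -/
def Mat {G : Type*} [Group G] [Fintype G] {S : Type*} [CommRing S] (θ : G → S) :
    Matrix G G S :=
  Matrix.of fun i j => θ (i * j⁻¹)

namespace MvPolynomial

variable {R σ ι : Type*} [CommSemiring R]

theorem prod_X_eq_monomial (s : Finset ι) (g : ι → σ) :
    ∏ i ∈ s, (X (g i) : MvPolynomial σ R) = monomial (∑ i ∈ s, Finsupp.single (g i) 1) 1 :=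
  (monomial_sum_one s _).symm

theorem sum_single_one_eq_single_card_iff (s : Finset ι) (g : ι → σ) (k : σ) :
    ∑ i ∈ s, Finsupp.single (g i) 1 = Finsupp.single k #s ↔ ∀ i ∈ s, g i = k := by
  classical
  constructor
  · intro h i hi
    by_contra hik
    have := DFunLike.congr_fun h (g i)
    rw [Finsupp.finsetSum_apply, Finsupp.single_eq_of_ne hik] at this
    exact (Finset.sum_eq_zero_iff.mp this i hi).not_gt (by simp)
  · intro h
    rw [Finset.sum_congr rfl fun i hi => by rw [h i hi], Finset.sum_const, Finsupp.smul_single,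
      smul_eq_mul, mul_one]

theorem coeff_single_card_prod_X [DecidableEq σ] (s : Finset ι) (g : ι → σ) (k : σ) :
    coeff (Finsupp.single k #s) (∏ i ∈ s, (X (g i) : MvPolynomial σ R)) =
      if ∀ i ∈ s, g i = k then 1 else 0 := by
  rw [prod_X_eq_monomial, coeff_monomial]
  exact if_congr (sum_single_one_eq_single_card_iff s g k) rfl rfl

end MvPolynomial

theorem Equiv.Perm.forall_mul_inv_eq_iff_eq_mulLeft {G : Type*} [Group G] (σ : Equiv.Perm G)
    (k : G) :
    (∀ i, σ i * i⁻¹ = k) ↔ σ = Equiv.mulLeft k := by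
  simp only [mul_inv_eq_iff_eq_mul, Equiv.ext_iff, Equiv.coe_mulLeft]

theorem coeff_det_Mat_X {G R : Type*} [Group G] [Fintype G] [DecidableEq G] [CommRing R]
    (k : G) :
    coeff (Finsupp.single k (Fintype.card G)) (Mat fun g => (X g : MvPolynomial G R)).det =
      (Equiv.Perm.sign (Equiv.mulLeft k) : R) := by
  simp_rw [Matrix.det_apply, coeff_sum, Units.smul_def, coeff_smul, Mat, Matrix.of_apply,
    ← Finset.card_univ, coeff_single_card_prod_X, Finset.mem_univ, true_imp_iff,
    Equiv.Perm.forall_mul_inv_eq_iff_eq_mulLeft]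
  simp only [smul_ite, zsmul_eq_mul, mul_one, smul_zero, sum_ite_eq', mem_univ, ↓reduceIte]

theorem det_circulant_symbolically_nonzero_general
    {G : Type*} [Group G] [Fintype G] [DecidableEq G]
    (K : Type*) [Field K] (k : G) :
    (MvPolynomial.coeff (Finsupp.single k (Fintype.card G))
        (Mat fun g => (MvPolynomial.X g : MvPolynomial G K)).det = 1 ∨
     MvPolynomial.coeff (Finsupp.single k (Fintype.card G))
        (Mat fun g => (MvPolynomial.X g : MvPolynomial G K)).det = -1) ∧
    (Mat fun g => (MvPolynomial.X g : MvPolynomial G K)).det ≠ 0 := by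
  have hsign := Int.units_eq_one_or (Equiv.Perm.sign (Equiv.mulLeft k))
  refine ⟨?_, ne_zero_iff.mpr ⟨_, (coeff_det_Mat_X k).trans_ne ?_⟩⟩ <;>
    rcases hsign with h | h <;> simp [coeff_det_Mat_X, h]

/-- With the entries of `θ` regarded as independent indeterminates, the monomial
`θ(g_k)^n` appears in `det(Mat θ)` with coefficient `±1`; in particular the
determinant is a nonzero polynomial. -/
theorem det_circulant_symbolically_nonzero
    {G : Type*} [Group G] [Fintype G] [DecidableEq G]
    (K : Type*) [Field K] [CharZero K] (k : G) :
    (MvPolynomial.coeff (Finsupp.single k (Fintype.card G))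
        (Mat fun g => (MvPolynomial.X g : MvPolynomial G K)).det = 1 ∨
     MvPolynomial.coeff (Finsupp.single k (Fintype.card G))
        (Mat fun g => (MvPolynomial.X g : MvPolynomial G K)).det = -1) ∧
    (Mat fun g => (MvPolynomial.X g : MvPolynomial G K)).det ≠ 0 :=
  det_circulant_symbolically_nonzero_general K k
end

section
/- Let G be a finite group, K a field, and L ≥ 1, r ≥ 1. For nonzero scalars λ_1,…,λ_{L-1} ∈ K and filters θ = (θ_1,…,θ_L) ∈ K[G]^L, define ψ = (λ_1 θ_1, λ_1^{-r} λ_2 θ_2, …, λ_{L-2}^{-r} λ_{L-1} θ_{L-1}, λ_{L-1}^{-r} θ_L). Then the PGCNN functions agree: Φ_θ = Φ_ψ, where Φ_θ(x) = σ_r(⋯σ_r(σ_r(x ∗ θ_1) ∗ θ_2) ⋯ ∗ θ_{L-1}) ∗ θ_L and σ_r is the componentwise r-th power. -/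
/-! Convolution is bilinear and `σ_r` is homogeneous of degree `r`. Hence if the input of
layer `i` is scaled by `a_i ^ r` and its filter by `a_{i+1} a_i^{-r}`, its output is scaled by
`a_{i+1}`, and after the activation the input of layer `i + 1` is scaled by `a_{i+1} ^ r`.
By induction the network output is scaled by `a_L`; the theorem is the case `a_0 = a_L = 1`,
`a_i = λ_i` for `0 < i < L`. -/

open Finset

variable {G : Type*} [Group G] [Fintype G] [DecidableEq G]
variable {K : Type*} [Field K]

/-- Convolution in the group algebra `K[G]`. -/
def conv {G : Type*} [Group G] [Fintype G] (θ ψ : G → K) : G → K :=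
  fun g => ∑ h : G, θ (g * h⁻¹) * ψ h

/-- The forward pass of a PGCNN: the `r`-th power activation is applied after each
layer except the last one. -/
def fwd {G : Type*} [Group G] [Fintype G] (r : ℕ) : List (G → K) → (G → K) → (G → K)
  | [], x => x
  | [t], x => conv x t
  | t :: s :: ts, x => fwd r (s :: ts) (fun g => (conv x t g) ^ r)

section

omit [DecidableEq G]

theorem conv_smul_smul (a b : K) (x t : G → K) :
    conv (a • x) (b • t) = (a * b) • conv x t := by
  funext g
  simp only [conv, Pi.smul_apply, smul_eq_mul, Finset.mul_sum]
  exact Finset.sum_congr rfl fun _ _ => by ring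

theorem conv_pow_smul_mul_inv_pow_smul (r : ℕ) {c : K} (hc : c ≠ 0) (b : K) (x t : G → K) :
    conv (c ^ r • x) ((b * c⁻¹ ^ r) • t) = b • conv x t := by
  rw [conv_smul_smul, inv_pow, mul_left_comm, mul_inv_cancel₀ (pow_ne_zero r hc), mul_one]

theorem fwd_cons_of_ne_nil (r : ℕ) (t : G → K) {ts : List (G → K)} (hts : ts ≠ [])
    (x : G → K) : fwd r (t :: ts) x = fwd r ts (conv x t ^ r) := by
  cases ts with
  | nil => contradiction
  | cons s ts => rfl

theorem fwd_ofFn_rescale (r : ℕ) (a : ℕ → K) (ha : ∀ i, a i ≠ 0) (n : ℕ)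
    (θ : Fin (n + 1) → G → K) (x : G → K) :
    fwd r (List.ofFn fun i => (a (i + 1) * (a i)⁻¹ ^ r) • θ i) (a 0 ^ r • x)
      = a (n + 1) • fwd r (List.ofFn θ) x := by
  induction n generalizing a x with
  | zero =>
    simp only [List.ofFn_succ, List.ofFn_zero, Fin.val_zero]
    rw [fwd, fwd, conv_pow_smul_mul_inv_pow_smul r (ha 0)]
  | succ n ih =>
    rw [List.ofFn_succ, fwd_cons_of_ne_nil _ _ (by simp), List.ofFn_succ (f := θ),
      fwd_cons_of_ne_nil _ _ (by simp)]
    simp only [Fin.val_zero, Fin.val_succ, zero_add]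
    rw [conv_pow_smul_mul_inv_pow_smul r (ha 0), smul_pow]
    exact ih (fun k => a (k + 1)) (fun k => ha (k + 1)) (fun i => θ i.succ) _

end

/-- Scaling invariance of the PGCNN parametrization: rescaling layer `l` by `λ_l` and
layer `l+1` by `λ_l^{-r}` (combined with its own scaling) leaves the network function
unchanged. -/
theorem pgcnn_scaling_invariance (L r : ℕ)
    (θ : Fin L → G → K) (lam : Fin (L - 1) → K) (hlam : ∀ i, lam i ≠ 0)
    (ψ : Fin L → G → K)
    (hψ : ∀ i : Fin L, ψ i = fun g =>
      (if h : (i : ℕ) < L - 1 then lam ⟨i, h⟩ else 1) *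
      (if h : 0 < (i : ℕ) then
          ((lam ⟨(i : ℕ) - 1, by have := i.isLt; omega⟩)⁻¹) ^ r else 1) *
      θ i g) :
    ∀ x : G → K, fwd r (List.ofFn θ) x = fwd r (List.ofFn ψ) x := by
  intro x
  rcases L with _ | n
  · simp only [List.ofFn_zero]
  set a : ℕ → K := fun k => if h : 0 < k ∧ k < n + 1 then lam ⟨k - 1, by omega⟩ else 1
  have ha : ∀ k, a k ≠ 0 := fun k => by
    simp only [a]
    split_ifs
    exacts [hlam _, one_ne_zero]
  have hψa : ψ = fun i : Fin (n + 1) => (a (i + 1) * (a i)⁻¹ ^ r) • θ i := by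
    funext i g
    rw [hψ i, Pi.smul_apply, smul_eq_mul]
    simp only [a]
    split_ifs <;> first | (exfalso; omega) | simp
  have ha0 : a 0 = 1 := dif_neg (by omega)
  have haL : a (n + 1) = 1 := dif_neg (by omega)
  have h := fwd_ofFn_rescale r a ha n θ x
  rw [ha0, haL, one_pow, one_smul, one_smul] at h
  rw [hψa, h]
end
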